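/- Two configurations are isomorphic (there is a permutation of objects mapping one to the other) if and only if their corresponding T-trees are isomorphic. -/

import Mathlib

/-- A T-tree: a node labeled by a type (ℕ), with children grouped into
    T-lists (one list per component type, in type order). -/
inductive TTree : Type where
  | node : ℕ → List (List TTree) → TTree

namespace TTree

/-- The root type (label) of a T-tree. -/
def label : TTree → ℕ
  | .node a _ => a

/-- The list of T-lists of a T-tree. -/
def tlists : TTree → List (List TTree)
  | .node _ ls => ls

/-- A T-tree is a leaf iff all its T-lists are empty. -/
def isLeaf : TTree → Bool
  | .node _ ls => ls.all List.isEmpty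

mutual
  /-- Comparison of T-trees: root types first, then the sequences of T-lists
      lexicographically by the T-list order ≪. -/
  def cmpT : TTree → TTree → Ordering
    | .node a ls, .node b ls' => (compare a b).then (cmpOuter ls ls')
  /-- Lexicographic comparison of sequences of T-lists by ≪
      (≪ compares T-lists by length first, then lexicographically by ⋞). -/
  def cmpOuter : List (List TTree) → List (List TTree) → Ordering
    | [], [] => .eq
    | [], _ :: _ => .lt
    | _ :: _, [] => .gt
    | l :: ls, l' :: ls' =>
        (((compare l.length l'.length).then (cmpInner l l')).then (cmpOuter ls ls'))
  /-- Lexicographic comparison of equal-length T-lists by ⋞. -/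
  def cmpInner : List TTree → List TTree → Ordering
    | [], [] => .eq
    | [], _ :: _ => .lt
    | _ :: _, [] => .gt
    | a :: as, b :: bs => (cmpT a b).then (cmpInner as bs)
end

/-- The order ⋞ on T-trees. -/
def le (C C' : TTree) : Prop := cmpT C C' ≠ .gt

/-- The order ≪ on T-lists: length first, then lexicographically by ⋞. -/
def lle (L L' : List TTree) : Prop :=
  ((compare L.length L'.length).then (cmpInner L L')) ≠ .gt

/-- Canonicity of a T-tree: every T-list sorted non-decreasingly by ⋞,
    every subtree canonical. -/
inductive Canonical : TTree → Prop where
  | mk (a : ℕ) (ls : List (List TTree))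
      (hsorted : ∀ L ∈ ls, L.Chain' le)
      (hrec : ∀ L ∈ ls, ∀ c ∈ L, Canonical c) :
      Canonical (.node a ls)

end TTree

namespace TTree

mutual
  /-- Isomorphism of T-trees: same root type, and the T-lists are pairwise
      related by permutation up to isomorphism, recursively. -/
  inductive Iso : TTree → TTree → Prop where
    | mk (a : ℕ) (ls ls' : List (List TTree)) :
        IsoOuter ls ls' → Iso (.node a ls) (.node a ls')
  /-- Pointwise relation between the sequences of T-lists. -/
  inductive IsoOuter : List (List TTree) → List (List TTree) → Prop where
    | nil : IsoOuter [] []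
    | cons {L L' : List TTree} {ls ls' : List (List TTree)} :
        IsoList L L' → IsoOuter ls ls' → IsoOuter (L :: ls) (L' :: ls')
  /-- Permutation of a T-list up to isomorphism of its members. -/
  inductive IsoList : List TTree → List TTree → Prop where
    | nil : IsoList [] []
    | cons {a b : TTree} {l₁ l₂ : List TTree} :
        Iso a b → IsoList l₁ l₂ → IsoList (a :: l₁) (b :: l₂)
    | swap (a b : TTree) (l : List TTree) : IsoList (a :: b :: l) (b :: a :: l)
    | trans {l₁ l₂ l₃ : List TTree} :
        IsoList l₁ l₂ → IsoList l₂ l₃ → IsoList l₁ l₃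
end

end TTree

/-- A configuration tree: nodes carry an object label and a type label, and
    children are grouped into T-lists, one per component type. -/
inductive CTree : Type where
  | node : ℕ → ℕ → List (List CTree) → CTree

namespace CTree

mutual
  /-- Relabel the objects of a configuration tree by `θ`. -/
  def mapObj (θ : ℕ → ℕ) : CTree → CTree
    | .node o T ls => .node (θ o) T (mapObjOuter θ ls)
  def mapObjOuter (θ : ℕ → ℕ) : List (List CTree) → List (List CTree)
    | [] => []
    | L :: ls => mapObjList θ L :: mapObjOuter θ ls
  def mapObjList (θ : ℕ → ℕ) : List CTree → List CTree
    | [] => []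
    | c :: cs => mapObj θ c :: mapObjList θ cs
end

mutual
  /-- The list of object labels occurring in a configuration tree. -/
  def objs : CTree → List ℕ
    | .node o _ ls => o :: objsOuter ls
  def objsOuter : List (List CTree) → List ℕ
    | [] => []
    | L :: ls => objsList L ++ objsOuter ls
  def objsList : List CTree → List ℕ
    | [] => []
    | c :: cs => objs c ++ objsList cs
end

mutual
  /-- The T-tree of a configuration tree: forget the object labels. -/
  def toT : CTree → TTree
    | .node _ T ls => .node T (toTOuter ls)
  def toTOuter : List (List CTree) → List (List TTree)
    | [] => []
    | L :: ls => toTList L :: toTOuter ls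
  def toTList : List CTree → List TTree
    | [] => []
    | c :: cs => toT c :: toTList cs
end

mutual
  /-- Two configuration trees describe the same configuration (same relations)
      iff they are equal up to reordering of the trees inside T-lists. -/
  inductive Reorder : CTree → CTree → Prop where
    | mk (o T : ℕ) (ls ls' : List (List CTree)) :
        ReorderOuter ls ls' → Reorder (.node o T ls) (.node o T ls')
  inductive ReorderOuter : List (List CTree) → List (List CTree) → Prop where
    | nil : ReorderOuter [] []
    | cons {L L' : List CTree} {ls ls' : List (List CTree)} :
        ReorderList L L' → ReorderOuter ls ls' → ReorderOuter (L :: ls) (L' :: ls')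
  inductive ReorderList : List CTree → List CTree → Prop where
    | nil : ReorderList [] []
    | cons {a b : CTree} {l₁ l₂ : List CTree} :
        Reorder a b → ReorderList l₁ l₂ → ReorderList (a :: l₁) (b :: l₂)
    | swap (a b : CTree) (l : List CTree) : ReorderList (a :: b :: l) (b :: a :: l)
    | trans {l₁ l₂ l₃ : List CTree} :
        ReorderList l₁ l₂ → ReorderList l₂ l₃ → ReorderList l₁ l₃
end

/-- Two configurations are isomorphic iff some permutation `θ` of the object
    set maps the relations of one onto the relations of the other. -/
def CIso (A B : CTree) : Prop :=
  ∃ θ : Equiv.Perm ℕ, Reorder (mapObj θ A) B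

end CTree

namespace CTree

mutual
theorem toT_mapObj (θ : ℕ → ℕ) : ∀ c, toT (mapObj θ c) = toT c
  | .node o T ls => by
      simp [mapObj, toT, toTOuter_mapObjOuter]
theorem toTOuter_mapObjOuter (θ : ℕ → ℕ) :
    ∀ ls, toTOuter (mapObjOuter θ ls) = toTOuter ls
  | [] => rfl
  | L :: ls => by
      simp [mapObjOuter, toTOuter, toTList_mapObjList, toTOuter_mapObjOuter]
theorem toTList_mapObjList (θ : ℕ → ℕ) :
    ∀ l, toTList (mapObjList θ l) = toTList l
  | [] => rfl
  | c :: cs => by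
      simp [mapObjList, toTList, toT_mapObj, toTList_mapObjList]
end

theorem reorder_iso : ∀ {A B : CTree}, Reorder A B → TTree.Iso (toT A) (toT B) :=
  fun h => CTree.Reorder.rec
    (motive_1 := fun A B _ => TTree.Iso (toT A) (toT B))
    (motive_2 := fun ls ls' _ => TTree.IsoOuter (toTOuter ls) (toTOuter ls'))
    (motive_3 := fun l l' _ => TTree.IsoList (toTList l) (toTList l'))
    (fun o T ls ls' _ ih => by simpa [toT] using TTree.Iso.mk T _ _ ih)
    (by simpa [toTOuter] using TTree.IsoOuter.nil)
    (fun _ _ ih1 ih2 => by simpa [toTOuter] using TTree.IsoOuter.cons ih1 ih2)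
    (by simpa [toTList] using TTree.IsoList.nil)
    (fun _ _ ih1 ih2 => by simpa [toTList] using TTree.IsoList.cons ih1 ih2)
    (fun a b l => by simpa [toTList] using TTree.IsoList.swap (toT a) (toT b) (toTList l))
    (fun _ _ ih1 ih2 => ih1.trans ih2)
    h

theorem reorder_objs_perm : ∀ {A B : CTree}, Reorder A B → (objs A).Perm (objs B) :=
  fun h => CTree.Reorder.rec
    (motive_1 := fun A B _ => (objs A).Perm (objs B))
    (motive_2 := fun ls ls' _ => (objsOuter ls).Perm (objsOuter ls'))
    (motive_3 := fun l l' _ => (objsList l).Perm (objsList l'))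
    (fun o T ls ls' _ ih => by simpa [objs] using ih.cons o)
    (List.Perm.refl _)
    (fun _ _ ih1 ih2 => by simpa [objsOuter] using ih1.append ih2)
    (List.Perm.refl _)
    (fun _ _ ih1 ih2 => by simpa [objsList] using ih1.append ih2)
    (fun a b l => by
      simp only [objsList, ← List.append_assoc]
      exact (List.perm_append_comm.append_right _))
    (fun _ _ ih1 ih2 => ih1.trans ih2)
    h

theorem iso_exists_reorder : ∀ {t t' : TTree}, TTree.Iso t t' →
    ∀ B : CTree, toT B = t' → ∃ B', Reorder B' B ∧ toT B' = t :=
  fun h => TTree.Iso.rec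
    (motive_1 := fun t t' _ => ∀ B : CTree, toT B = t' → ∃ B', Reorder B' B ∧ toT B' = t)
    (motive_2 := fun ls ls' _ => ∀ lsB : List (List CTree), toTOuter lsB = ls' →
      ∃ lsB', ReorderOuter lsB' lsB ∧ toTOuter lsB' = ls)
    (motive_3 := fun l l' _ => ∀ lB : List CTree, toTList lB = l' →
      ∃ lB', ReorderList lB' lB ∧ toTList lB' = l)
    (fun a ls ls' _ ih B hB => by
      obtain ⟨o, T, lsB⟩ := B
      simp only [toT, TTree.node.injEq] at hB
      obtain ⟨rfl, hls⟩ := hB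
      obtain ⟨lsB', h1, h2⟩ := ih lsB hls
      exact ⟨.node o T lsB', Reorder.mk o T lsB' lsB h1, by simp [toT, h2]⟩)
    (fun lsB hB => by
      cases lsB with
      | nil => exact ⟨[], ReorderOuter.nil, rfl⟩
      | cons L ls => simp [toTOuter] at hB)
    (fun _ _ ih1 ih2 lsB hB => by
      cases lsB with
      | nil => simp [toTOuter] at hB
      | cons LB lsB =>
        simp only [toTOuter, List.cons.injEq] at hB
        obtain ⟨LB', hL1, hL2⟩ := ih1 LB hB.1
        obtain ⟨lsB', hs1, hs2⟩ := ih2 lsB hB.2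
        exact ⟨LB' :: lsB', ReorderOuter.cons hL1 hs1, by simp [toTOuter, hL2, hs2]⟩)
    (fun lB hB => by
      cases lB with
      | nil => exact ⟨[], ReorderList.nil, rfl⟩
      | cons c cs => simp [toTList] at hB)
    (fun _ _ ih1 ih2 lB hB => by
      cases lB with
      | nil => simp [toTList] at hB
      | cons c cs =>
        simp only [toTList, List.cons.injEq] at hB
        obtain ⟨c', h1, h2⟩ := ih1 c hB.1
        obtain ⟨cs', h3, h4⟩ := ih2 cs hB.2
        exact ⟨c' :: cs', ReorderList.cons h1 h3, by simp [toTList, h2, h4]⟩)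
    (fun a b l lB hB => by
      match lB, hB with
      | c :: d :: es, hB =>
        simp only [toTList, List.cons.injEq] at hB
        obtain ⟨hc, hd, hes⟩ := hB
        exact ⟨d :: c :: es, ReorderList.swap d c es, by simp [toTList, hc, hd, hes]⟩)
    (fun _ _ ih1 ih2 lB hB => by
      obtain ⟨l₂', h1, h2⟩ := ih2 lB hB
      obtain ⟨l₁', h3, h4⟩ := ih1 l₂' h2
      exact ⟨l₁', h3.trans h1, h4⟩)
    h

mutual
theorem objs_len_eq : ∀ (A B : CTree), toT A = toT B → (objs A).length = (objs B).length
  | .node o T ls, .node o' T' ls', h => by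
      simp only [toT, TTree.node.injEq] at h
      simp [objs, objsOuter_len_eq ls ls' h.2]
theorem objsOuter_len_eq : ∀ (ls ls' : List (List CTree)), toTOuter ls = toTOuter ls' →
    (objsOuter ls).length = (objsOuter ls').length
  | [], [], _ => rfl
  | [], _ :: _, h => by simp [toTOuter] at h
  | _ :: _, [], h => by simp [toTOuter] at h
  | L :: ls, L' :: ls', h => by
      simp only [toTOuter, List.cons.injEq] at h
      simp [objsOuter, objsList_len_eq L L' h.1, objsOuter_len_eq ls ls' h.2]
theorem objsList_len_eq : ∀ (l l' : List CTree), toTList l = toTList l' →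
    (objsList l).length = (objsList l').length
  | [], [], _ => rfl
  | [], _ :: _, h => by simp [toTList] at h
  | _ :: _, [], h => by simp [toTList] at h
  | c :: cs, c' :: cs', h => by
      simp only [toTList, List.cons.injEq] at h
      simp [objsList, objs_len_eq c c' h.1, objsList_len_eq cs cs' h.2]
end

mutual
theorem mapObj_eq_of (θ : ℕ → ℕ) : ∀ (A B : CTree), toT A = toT B →
    (objs A).map θ = objs B → mapObj θ A = B
  | .node o T ls, .node o' T' ls', h, hm => by
      simp only [toT, TTree.node.injEq] at h
      simp only [objs, List.map_cons, List.cons.injEq] at hm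
      simp [mapObj, h.1, hm.1, mapObjOuter_eq_of θ ls ls' h.2 hm.2]
theorem mapObjOuter_eq_of (θ : ℕ → ℕ) : ∀ (ls ls' : List (List CTree)),
    toTOuter ls = toTOuter ls' → (objsOuter ls).map θ = objsOuter ls' →
    mapObjOuter θ ls = ls'
  | [], [], _, _ => rfl
  | [], _ :: _, h, _ => by simp [toTOuter] at h
  | _ :: _, [], h, _ => by simp [toTOuter] at h
  | L :: ls, L' :: ls', h, hm => by
      simp only [toTOuter, List.cons.injEq] at h
      simp only [objsOuter, List.map_append] at hm
      have hlen : ((objsList L).map θ).length = (objsList L').length := by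
        simp [objsList_len_eq L L' h.1]
      obtain ⟨h1, h2⟩ := List.append_inj hm hlen
      simp [mapObjOuter, mapObjList_eq_of θ L L' h.1 h1,
        mapObjOuter_eq_of θ ls ls' h.2 h2]
theorem mapObjList_eq_of (θ : ℕ → ℕ) : ∀ (l l' : List CTree),
    toTList l = toTList l' → (objsList l).map θ = objsList l' →
    mapObjList θ l = l'
  | [], [], _, _ => rfl
  | [], _ :: _, h, _ => by simp [toTList] at h
  | _ :: _, [], h, _ => by simp [toTList] at h
  | c :: cs, c' :: cs', h, hm => by
      simp only [toTList, List.cons.injEq] at h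
      simp only [objsList, List.map_append] at hm
      have hlen : ((objs c).map θ).length = (objs c').length := by
        simp [objs_len_eq c c' h.1]
      obtain ⟨h1, h2⟩ := List.append_inj hm hlen
      simp [mapObjList, mapObj_eq_of θ c c' h.1 h1,
        mapObjList_eq_of θ cs cs' h.2 h2]
end

theorem exists_perm_map : ∀ (l₁ l₂ : List ℕ), l₁.Nodup → l₂.Nodup →
    l₁.length = l₂.length → ∃ θ : Equiv.Perm ℕ, l₁.map θ = l₂
  | [], [], _, _, _ => ⟨1, rfl⟩
  | [], _ :: _, _, _, h => by simp at h
  | _ :: _, [], _, _, h => by simp at h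
  | a :: as, b :: bs, h1, h2, hlen => by
      simp only [List.nodup_cons] at h1 h2
      obtain ⟨π, hπ⟩ := exists_perm_map as bs h1.2 h2.2 (by simpa using hlen)
      refine ⟨π.trans (Equiv.swap (π a) b), ?_⟩
      have hmem : ∀ x ∈ as, π x ∈ bs := fun x hx => hπ ▸ List.mem_map_of_mem hx
      simp only [List.map_cons, Equiv.trans_apply, Equiv.swap_apply_left, List.cons.injEq]
      refine ⟨trivial, ?_⟩
      rw [← hπ]
      refine List.map_congr_left (fun x hx => ?_)
      exact Equiv.swap_apply_of_ne_of_ne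
        (fun h => h1.1 (π.injective h ▸ hx)) (fun h => h2.1 (h ▸ hmem x hx))

end CTree

/-- Two configurations (with pairwise distinct object labels) are isomorphic
    if and only if their corresponding T-trees are isomorphic. -/
theorem config_iso_iff_ttree_iso :
    ∀ A B : CTree, (CTree.objs A).Nodup → (CTree.objs B).Nodup →
      (CTree.CIso A B ↔ TTree.Iso (CTree.toT A) (CTree.toT B)) := by
  intro A B hA hB
  constructor
  · rintro ⟨θ, h⟩
    have := CTree.reorder_iso h
    rwa [CTree.toT_mapObj] at this
  · intro h
    obtain ⟨B', hR, hT⟩ := CTree.iso_exists_reorder h B rfl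
    have hperm := CTree.reorder_objs_perm hR
    have hB' : (CTree.objs B').Nodup := hperm.nodup_iff.mpr hB
    have hlen := CTree.objs_len_eq A B' hT.symm
    obtain ⟨θ, hθ⟩ := CTree.exists_perm_map _ _ hA hB' hlen
    exact ⟨θ, by rw [CTree.mapObj_eq_of θ A B' hT.symm hθ]; exact hR⟩
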